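/- arXiv:2404.10929 — 6 statements merged into one kernel-verified Lean document; each statement's English description precedes it below -/
import Mathlib

section
/- Let λ > 0 and a_u, a_l > 0, and let r_u, r_l, r_p be real constants. The unique global minimizer of the passenger cost function f(p_u, p_l, p_p) = p_u·(r_u + λ·p_u/a_u) + p_l·(r_l + λ·p_l/a_l) + p_p·(r_p + λ·p_p) over the affine plane {(p_u, p_l, p_p) ∈ ℝ³ : p_u + p_l + p_p = 1} is given by p_u* = (2λ·a_u + a_l·a_u·(r_l − r_u) + a_u·(r_p − r_u)) / (2λ·(a_l + a_u + 1)), p_l* = (2λ·a_l + a_l·a_u·(r_u − r_l) + a_l·(r_p − r_l)) / (2λ·(a_l + a_u + 1)), and p_p* = 1 − p_u* − p_l*, which equals (2λ·(a_l + a_u + 1) − a_u·(2λ + a_l(r_l−r_u) + r_p − r_u) − a_l·(2λ + a_u(r_u−r_l) + r_p − r_l))/(2λ(a_l + a_u + 1)); that is, (p_u*, p_l*, 1 − p_u* − p_l*) is the unique point of the plane at which f attains its minimum over the plane. -/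
/-- The passenger cost function. -/
noncomputable def passengerCost (lam au al ru rl rp pu pl pp : ℝ) : ℝ :=
  pu * (ru + lam * pu / au) + pl * (rl + lam * pl / al) + pp * (rp + lam * pp)

lemma cost_diff (lam au al ru rl rp pu pl qu ql : ℝ)
    (hlam : lam ≠ 0) (hau : au ≠ 0) (hal : al ≠ 0)
    (hpu : pu = (2 * lam * au + al * au * (rl - ru) + au * (rp - ru)) /
      (2 * lam * (al + au + 1)))
    (hpl : pl = (2 * lam * al + al * au * (ru - rl) + al * (rp - rl)) /
      (2 * lam * (al + au + 1)))
    (hd : al + au + 1 ≠ 0) :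
    passengerCost lam au al ru rl rp qu ql (1 - qu - ql) -
      passengerCost lam au al ru rl rp pu pl (1 - pu - pl) =
    lam / au * (qu - pu) ^ 2 + lam / al * (ql - pl) ^ 2 +
      lam * ((qu - pu) + (ql - pl)) ^ 2 := by
  subst hpu hpl
  unfold passengerCost
  field_simp
  ring

/-- the point (p_u*, p_l*, 1 − p_u* − p_l*) given by the displayed formulas is
the unique minimizer of the passenger cost function over the plane p_u + p_l + p_p = 1. -/
theorem passenger_unique_minimizer (lam au al ru rl rp : ℝ)
    (hlam : 0 < lam) (hau : 0 < au) (hal : 0 < al)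
    (pu pl : ℝ)
    (hpu : pu = (2 * lam * au + al * au * (rl - ru) + au * (rp - ru)) /
      (2 * lam * (al + au + 1)))
    (hpl : pl = (2 * lam * al + al * au * (ru - rl) + al * (rp - rl)) /
      (2 * lam * (al + au + 1))) :
    ∀ qu ql qp : ℝ, qu + ql + qp = 1 →
      passengerCost lam au al ru rl rp pu pl (1 - pu - pl) ≤
        passengerCost lam au al ru rl rp qu ql qp ∧
      (passengerCost lam au al ru rl rp qu ql qp =
          passengerCost lam au al ru rl rp pu pl (1 - pu - pl) →
        (qu, ql, qp) = (pu, pl, 1 - pu - pl)) := by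
  intro qu ql qp hsum
  have hqp : qp = 1 - qu - ql := by linarith
  subst hqp
  have hd : al + au + 1 ≠ 0 := by positivity
  have key := cost_diff lam au al ru rl rp pu pl qu ql hlam.ne' hau.ne' hal.ne' hpu hpl hd
  constructor
  · nlinarith [sq_nonneg (qu - pu), sq_nonneg (ql - pl), sq_nonneg (qu - pu + (ql - pl)),
      div_pos hlam hau, div_pos hlam hal]
  · intro heq
    have h0 : lam / au * (qu - pu) ^ 2 + lam / al * (ql - pl) ^ 2 +
        lam * ((qu - pu) + (ql - pl)) ^ 2 = 0 := by linarith
    have n1 := mul_nonneg (div_pos hlam hau).le (sq_nonneg (qu - pu))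
    have n2 := mul_nonneg (div_pos hlam hal).le (sq_nonneg (ql - pl))
    have n3 := mul_nonneg hlam.le (sq_nonneg (qu - pu + (ql - pl)))
    have e1 : lam / au * (qu - pu) ^ 2 = 0 := by linarith
    have e2 : lam / al * (ql - pl) ^ 2 = 0 := by linarith
    have h1 : qu = pu := by
      have := (mul_eq_zero.mp e1).resolve_left (div_pos hlam hau).ne'
      have := pow_eq_zero_iff (n := 2) (by norm_num) |>.mp this
      linarith
    have h2 : ql = pl := by
      have := (mul_eq_zero.mp e2).resolve_left (div_pos hlam hal).ne'
      have := pow_eq_zero_iff (n := 2) (by norm_num) |>.mp this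
      linarith
    subst h1 h2
    norm_num
end

section
/- Let λ > 0, 0 < A < 1, and real constants r_u, r_l, r_p, c_u, c_l, g satisfying c_u ≥ g, c_l ≥ g, r_u ≤ r_p + 2λ, r_l ≤ r_p + 2λ, c_u > c_l, and r_l > r_u. Then the critical point a* = [(c_l − c_u)·(A·r_l − A·r_u + 2λ + r_p) − c_l·r_l + c_u·r_u + g·(r_l − r_u)] / (2·(r_u − r_l)·(c_u − c_l)) of the driver allocation function satisfies a* > A. -/
/-- Case I of the tipping-over theorem: under c_u > c_l and r_l > r_u,
the critical point a* of the driver allocation function satisfies a* > A. -/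
theorem critical_point_above_A (lam A ru rl rp cu cl g : ℝ)
    (hlam : 0 < lam) (hA0 : 0 < A) (hA1 : A < 1)
    (hcu : g ≤ cu) (hcl : g ≤ cl)
    (hru : ru ≤ rp + 2 * lam) (hrl : rl ≤ rp + 2 * lam)
    (hc : cl < cu) (hr : ru < rl) :
    A < ((cl - cu) * (A * rl - A * ru + 2 * lam + rp) - cl * rl + cu * ru +
          g * (rl - ru)) / (2 * (ru - rl) * (cu - cl)) := by
  have hD : 2 * (ru - rl) * (cu - cl) < 0 := by nlinarith
  rw [lt_div_iff_of_neg hD]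
  nlinarith [mul_pos (sub_pos.2 hc) (sub_pos.2 hr),
    mul_nonneg (sub_nonneg.2 hcl) (sub_pos.2 hr).le,
    mul_pos (sub_pos.2 hc) (mul_pos (sub_pos.2 hA1) (sub_pos.2 hr)),
    mul_nonneg (sub_pos.2 hc).le (sub_nonneg.2 hrl)]
end

section
/- Let λ > 0, 0 < A < 1, and real constants r_u, r_l, r_p, c_u, c_l, g satisfying c_u ≥ g, c_l ≥ g, r_u ≤ r_p + 2λ, r_l ≤ r_p + 2λ, c_l > c_u, and r_u > r_l. Then the critical point a* = [(c_l − c_u)·(A·r_l − A·r_u + 2λ + r_p) − c_l·r_l + c_u·r_u + g·(r_l − r_u)] / (2·(r_u − r_l)·(c_u − c_l)) of the driver allocation function satisfies a* < 0. -/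
/-- Case II of the tipping-over theorem: under c_l > c_u and r_u > r_l,
the critical point a* of the driver allocation function satisfies a* < 0. -/
theorem critical_point_below_zero (lam A ru rl rp cu cl g : ℝ)
    (hlam : 0 < lam) (hA0 : 0 < A) (hA1 : A < 1)
    (hcu : g ≤ cu) (hcl : g ≤ cl)
    (hru : ru ≤ rp + 2 * lam) (hrl : rl ≤ rp + 2 * lam)
    (hc : cu < cl) (hr : rl < ru) :
    ((cl - cu) * (A * rl - A * ru + 2 * lam + rp) - cl * rl + cu * ru +
        g * (rl - ru)) / (2 * (ru - rl) * (cu - cl)) < 0 := by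
  apply div_neg_of_pos_of_neg
  · nlinarith [mul_pos (sub_pos.mpr hc) (mul_pos (sub_pos.mpr (by linarith : A < (1:ℝ))) (sub_pos.mpr hr)),
      mul_nonneg (sub_nonneg.mpr hcu) (le_of_lt (sub_pos.mpr hr)),
      mul_pos (sub_pos.mpr hc) (sub_pos.mpr hr)]
  · have := mul_pos (sub_pos.mpr hr) (sub_pos.mpr hc)
    nlinarith
end

section
/- Let λ > 0, 0 < A < 1, and real constants r_u, r_l, r_p, c_u, c_l, g satisfying c_u ≥ g, c_l ≥ g, r_u ≤ r_p + 2λ, and r_l ≤ r_p + 2λ. Define the driver allocation function f : ℝ → ℝ by f(x) = [(2λx + (A − x)·x·(r_l − r_u) + x·(r_p − r_u))·(c_u − g) + (2λ·(A − x) + (A − x)·x·(r_u − r_l) + (A − x)·(r_p − r_l))·(c_l − g)] / (2λ·(A + 1)). Then for every x ∈ [0, A], f(x) ≤ max(f(0), f(A)). (In game-theoretic terms: no mixed strategy for the drivers' allocation is strictly better than both pure strategies, i.e. drivers prefer a monopoly allocation.) -/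
/-- The driver allocation function: drivers allocate x availability to platform U
and A − x to platform L. -/
noncomputable def driverAlloc (lam A ru rl rp cu cl g : ℝ) (x : ℝ) : ℝ :=
  ((2 * lam * x + (A - x) * x * (rl - ru) + x * (rp - ru)) * (cu - g) +
      (2 * lam * (A - x) + (A - x) * x * (ru - rl) + (A - x) * (rp - rl)) * (cl - g)) /
    (2 * lam * (A + 1))

/-- no mixed strategy for the drivers' allocation is strictly better than both
pure strategies, i.e. drivers prefer a monopoly allocation. -/
theorem drivers_prefer_monopoly (lam A ru rl rp cu cl g : ℝ)
    (hlam : 0 < lam) (hA0 : 0 < A) (hA1 : A < 1)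
    (hcu : g ≤ cu) (hcl : g ≤ cl)
    (hru : ru ≤ rp + 2 * lam) (hrl : rl ≤ rp + 2 * lam) :
    ∀ x ∈ Set.Icc (0 : ℝ) A,
      driverAlloc lam A ru rl rp cu cl g x ≤
        max (driverAlloc lam A ru rl rp cu cl g 0) (driverAlloc lam A ru rl rp cu cl g A) := by
  rintro x ⟨hx0, hxA⟩
  have hD : 0 < 2 * lam * (A + 1) := by positivity
  set N : ℝ → ℝ := fun y =>
    (2 * lam * y + (A - y) * y * (rl - ru) + y * (rp - ru)) * (cu - g) +
      (2 * lam * (A - y) + (A - y) * y * (ru - rl) + (A - y) * (rp - rl)) * (cl - g) with hN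
  have hCu : 0 ≤ cu - g := by linarith
  have hCl : 0 ≤ cl - g := by linarith
  have hP : 0 ≤ 2 * lam + rp - ru := by linarith
  have hQ : 0 ≤ 2 * lam + rp - rl := by linarith
  have key : N x ≤ N 0 ∨ N x ≤ N A := by
    rcases le_or_gt ((ru - rl) * (cl - cu)) 0 with hK | hK
    · -- convex case: N x lies below the chord, so below the max endpoint
      rcases le_total (N 0) (N A) with h | h
      · right
        have h1 : A * N x ≤ x * N A + (A - x) * N 0 := by
          simp only [hN]
          nlinarith [mul_nonneg (mul_nonneg hx0 (by linarith : (0:ℝ) ≤ A - x)) (neg_nonneg.2 hK)]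
        nlinarith [mul_nonneg (by linarith : (0:ℝ) ≤ A - x) (by linarith : (0:ℝ) ≤ N A - N 0)]
      · left
        have h1 : A * N x ≤ x * N A + (A - x) * N 0 := by
          simp only [hN]
          nlinarith [mul_nonneg (mul_nonneg hx0 (by linarith : (0:ℝ) ≤ A - x)) (neg_nonneg.2 hK)]
        nlinarith [mul_nonneg hx0 (by linarith : (0:ℝ) ≤ N 0 - N A)]
    · rcases lt_or_gt_of_ne (show ru - rl ≠ 0 by intro h; rw [h] at hK; simp at hK) with hs | hs
      · -- ru < rl, hence cl < cu : max at x = A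
        have hC : cl - cu < 0 := by
          by_contra h
          push_neg at h
          nlinarith
        right
        simp only [hN]
        nlinarith [mul_nonneg hCl (by linarith : (0:ℝ) ≤ rl - ru),
          mul_nonneg (by linarith : (0:ℝ) ≤ A - x) hQ,
          mul_nonneg (mul_nonneg (by linarith : (0:ℝ) ≤ A - x) hQ) (by linarith : (0:ℝ) ≤ cu - cl),
          mul_nonneg (mul_nonneg (by linarith : (0:ℝ) ≤ A - x) (by linarith : (0:ℝ) ≤ 1 - x)) (mul_nonneg (by linarith : (0:ℝ) ≤ rl - ru) (by linarith : (0:ℝ) ≤ cu - cl)),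
          mul_nonneg (mul_nonneg (by linarith : (0:ℝ) ≤ A - x) (by linarith : (0:ℝ) ≤ rl - ru)) hCl]
      · -- rl < ru, hence cu < cl : max at x = 0
        have hC : 0 < cl - cu := by
          by_contra h
          push_neg at h
          nlinarith
        left
        simp only [hN]
        nlinarith [mul_nonneg hCu (by linarith : (0:ℝ) ≤ ru - rl),
          mul_nonneg hx0 hP,
          mul_nonneg (mul_nonneg hx0 hP) (by linarith : (0:ℝ) ≤ cl - cu),
          mul_nonneg (mul_nonneg hx0 (by linarith : (0:ℝ) ≤ 1 - (A - x))) (mul_nonneg (by linarith : (0:ℝ) ≤ ru - rl) (by linarith : (0:ℝ) ≤ cl - cu)),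
          mul_nonneg (mul_nonneg hx0 (by linarith : (0:ℝ) ≤ ru - rl)) hCu]
  have hdefs : ∀ y : ℝ, driverAlloc lam A ru rl rp cu cl g y = N y / (2 * lam * (A + 1)) := by
    intro y; rfl
  rcases key with h | h
  · exact le_max_of_le_left (by rw [hdefs, hdefs]; exact div_le_div_of_nonneg_right h hD.le |>.trans_eq rfl)
  · exact le_max_of_le_right (by rw [hdefs, hdefs]; exact div_le_div_of_nonneg_right h hD.le |>.trans_eq rfl)
end

section
/- Let λ, r_p, g, r_u, r_l, c_u, c_l be real numbers. Then the two conditions (i) (c_l − c_u)·(r_l − r_u) = 0 and (ii) (2λ + r_p − r_l)·(c_l − g) = (2λ + r_p − r_u)·(c_u − g) hold simultaneously if and only if at least one of the following holds: (a) c_l = c_u and r_l = r_u; (b) c_l = g and c_u = g; (c) r_l = 2λ + r_p and r_u = 2λ + r_p. -/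
/-- characterization of the collusion modes. The vanishing-Hessian condition
and the pure-strategy balance condition hold simultaneously iff (a) double-sided collusion,
(b) single-sided collusion at commission g, or (c) rates at the demand-collapse level. -/
theorem collusion_modes (lam rp g ru rl cu cl : ℝ) :
    ((cl - cu) * (rl - ru) = 0 ∧
        (2 * lam + rp - rl) * (cl - g) = (2 * lam + rp - ru) * (cu - g)) ↔
      ((cl = cu ∧ rl = ru) ∨ (cl = g ∧ cu = g) ∨
        (rl = 2 * lam + rp ∧ ru = 2 * lam + rp)) := by
  constructor
  · rintro ⟨h1, h2⟩
    rcases mul_eq_zero.mp h1 with hc | hr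
    · have hc' : cl = cu := by linarith
      subst hc'
      rcases mul_eq_zero.mp (show (rl - ru) * (cl - g) = 0 by nlinarith) with h | h
      · exact Or.inl ⟨rfl, by linarith⟩
      · exact Or.inr (Or.inl ⟨by linarith, by linarith⟩)
    · have hr' : rl = ru := by linarith
      subst hr'
      rcases mul_eq_zero.mp (show (cl - cu) * (2 * lam + rp - rl) = 0 by nlinarith) with h | h
      · exact Or.inl ⟨by linarith, rfl⟩
      · exact Or.inr (Or.inr ⟨by linarith, by linarith⟩)
  · rintro (⟨h1, h2⟩ | ⟨h1, h2⟩ | ⟨h1, h2⟩) <;> subst h1 <;> subst h2 <;>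
      constructor <;> ring
end

section
/- Let λ > 0, 0 < A ≤ 1, and real constants r_u, r_l, r_p with r_u < r_p + 2λ and r_l ≤ r_p + 2λ. Define p_star = (4λ·A + A²·(r_l − r_u) + 2A·(r_p − r_u)) / (8λ·(A + 1)) (platform U's passenger share when drivers split equally between the platforms) and p_prime = (2λ·A + A·(r_p − r_u)) / (2λ·(A + 1)) (platform U's passenger share when all drivers serve U). Then p_prime > p_star. -/
/-- platform U's passenger share when all drivers serve U strictly exceeds
its share when drivers split equally between the two platforms. -/
theorem deviation_increases_demand (lam A ru rl rp : ℝ)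
    (hlam : 0 < lam) (hA0 : 0 < A) (hA1 : A ≤ 1)
    (hru : ru < rp + 2 * lam) (hrl : rl ≤ rp + 2 * lam) :
    (4 * lam * A + A ^ 2 * (rl - ru) + 2 * A * (rp - ru)) / (8 * lam * (A + 1)) <
      (2 * lam * A + A * (rp - ru)) / (2 * lam * (A + 1)) := by
  have h1 : (0:ℝ) < 8 * lam * (A + 1) := by positivity
  have h2 : (0:ℝ) < 2 * lam * (A + 1) := by positivity
  rw [div_lt_div_iff₀ h1 h2]
  nlinarith [mul_pos hA0 hlam, mul_pos (mul_pos hA0 hA0) hlam,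
    mul_le_mul_of_nonneg_left hrl hA0.le, sq_nonneg A, mul_pos hA0 (sub_pos.2 hru),
    mul_nonneg (mul_nonneg hA0.le (sub_nonneg.2 hA1)) (sub_pos.2 hru).le,
    mul_nonneg (mul_nonneg (mul_nonneg hA0.le hA0.le) (sub_nonneg.2 hA1)) hlam.le]
end
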